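/- arXiv:2508.16356 — 9 statements merged into one kernel-verified Lean document; each statement's English description precedes it below -/
import Mathlib

section
/- Every finite group of square-free order can be generated by two elements. -/
/-!
All Sylow subgroups of a group of squarefree order have prime order, so it is a Z-group, and a
finite Z-group has cyclic commutator subgroup and cyclic abelianization. A cyclic-by-cyclic group
is generated by a generator of the kernel together with a lift of a generator of the quotient.
-/

theorem MonoidHom.exists_closure_pair_eq_top_of_isCyclic {G H : Type*} [Group G] [Group H]
    [IsCyclic H] (f : G →* H) (hf : Function.Surjective f) (hker : IsCyclic f.ker) :
    ∃ a b : G, Subgroup.closure {a, b} = ⊤ := by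
  obtain ⟨a, ha⟩ := f.ker.isCyclic_iff_exists_zpowers_eq_top.mp hker
  obtain ⟨c, hc⟩ := isCyclic_iff_exists_zpowers_eq_top.mp ‹IsCyclic H›
  obtain ⟨b, rfl⟩ := hf c
  refine ⟨a, b, ?_⟩
  set S := Subgroup.closure {a, b}
  have hker_le : f.ker ≤ S :=
    ha ▸ (Subgroup.zpowers_le).mpr (Subgroup.subset_closure (Set.mem_insert a {b}))
  have hmap : S.map f = ⊤ := by
    refine eq_top_iff.mpr (hc ▸ ?_)
    rw [← MonoidHom.map_zpowers]
    exact Subgroup.map_mono ((Subgroup.zpowers_le).mpr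
      (Subgroup.subset_closure (Set.mem_insert_of_mem a rfl)))
  rw [← sup_eq_left.mpr hker_le, ← Subgroup.comap_map_eq, hmap, Subgroup.comap_top]

/-- Every finite group of square-free order can be generated by two elements. -/
theorem stmt_3 (G : Type) [Group G] [Finite G] (h : Squarefree (Nat.card G)) :
    ∃ a b : G, Subgroup.closure {a, b} = ⊤ := by
  have := IsZGroup.of_squarefree h
  refine (Abelianization.of : G →* Abelianization G).exists_closure_pair_eq_top_of_isCyclic
    QuotientGroup.mk_surjective ?_
  rw [Abelianization.ker_of]
  exact IsZGroup.isCyclic_commutator G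
end

section
/- Let p > q be primes with (p,q) ≠ (3,2). Then every group of order p·q^2 has a cyclic normal subgroup with cyclic quotient (i.e., is metacyclic). -/
/-!
Sylow counting, together with `(p, q) ≠ (3, 2)`, makes the Sylow `p`-subgroup `P` normal of
order `p`. Conjugation embeds `G ⧸ C_G(P)` in the cyclic group `Aut P`. If `C_G(P) ≠ G`, then
`C_G(P)` has order `p` or `p * q` and contains `P` centrally, so it is abelian of squarefree
order, hence cyclic. If `C_G(P) = G`, then `P` is central and `⟨a * b⟩`, for `a ∈ P` of order
`p` and `b` of order `q`, is cyclic of index `q`, the smallest prime factor of `|G|`; such a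
subgroup is normal.
-/

open Subgroup

def Group.IsMetacyclic (G : Type*) [Group G] : Prop :=
  ∃ (N : Subgroup G) (_ : N.Normal), IsCyclic N ∧ IsCyclic (G ⧸ N)

theorem Nat.eq_one_of_dvd_sq_of_modEq_one {p q d : ℕ} (hp : p.Prime) (hq : q.Prime) (hpq : q < p)
    (hne : ¬ (p = 3 ∧ q = 2)) (hd : d ∣ q ^ 2) (hmod : d ≡ 1 [MOD p]) : d = 1 := by
  obtain ⟨k, hk, rfl⟩ := (Nat.dvd_prime_pow hq).mp hd
  have hq1 := hq.one_lt
  interval_cases k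
  · rfl
  · rw [pow_one, Nat.ModEq, Nat.mod_eq_of_lt hpq, Nat.mod_eq_of_lt hp.one_lt] at hmod
    omega
  · have hdvd : p ∣ (q + 1) * (q - 1) := by
      simpa [Nat.pow_two_sub_pow_two q 1] using
        (Nat.modEq_iff_dvd' (Nat.one_le_pow _ _ hq.pos)).mp hmod.symm
    rcases hp.dvd_mul.mp hdvd with h | h
    · have hp_eq : p = q + 1 := by have := Nat.le_of_dvd (by omega) h; omega
      -- of two consecutive primes one is even, hence equal to 2
      rcases Nat.even_or_odd q with hev | hodd
      · have := (hq.even_iff).mp hev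
        exact absurd ⟨by omega, this⟩ hne
      · have : p = 2 := (hp.even_iff).mp (hp_eq ▸ hodd.add_one)
        omega
    · have := Nat.le_of_dvd (by omega) h
      omega

theorem Nat.minFac_mul_sq_of_lt {p q : ℕ} (hp : p.Prime) (hq : q.Prime) (hpq : q < p) :
    (p * q ^ 2).minFac = q := by
  have hqdvd : q ∣ p * q ^ 2 := dvd_mul_of_dvd_right (dvd_pow_self q two_ne_zero) p
  refine le_antisymm (Nat.minFac_le_of_dvd hq.two_le hqdvd) ?_
  have hmin : (p * q ^ 2).minFac.Prime := Nat.minFac_prime (by nlinarith [hp.one_lt, hq.one_lt])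
  rcases hmin.dvd_mul.mp (Nat.minFac_dvd _) with h | h
  · exact ((Nat.prime_dvd_prime_iff_eq hmin hp).mp h).symm ▸ hpq.le
  · exact ((Nat.prime_dvd_prime_iff_eq hmin hq).mp (hmin.dvd_of_dvd_pow h)).ge

section

variable {G : Type*} [Group G]

theorem Sylow.card_eq_of_card_eq_mul [Finite G] {p m : ℕ} [Fact p.Prime]
    (P : Sylow p G) (hG : Nat.card G = p * m) (hpm : ¬ p ∣ m) : Nat.card P = p := by
  have hm : m ≠ 0 := by rintro rfl; exact hpm (dvd_zero p)
  rw [P.card_eq_multiplicity, hG, Nat.factorization_mul (Fact.out : p.Prime).ne_zero hm,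
    Finsupp.add_apply, (Fact.out : p.Prime).factorization_self,
    Nat.factorization_eq_zero_of_not_dvd hpm, pow_one]

theorem Sylow.normal_of_index_eq_sq [Finite G] {p q : ℕ} [Fact p.Prime] (hq : q.Prime)
    (hpq : q < p) (hne : ¬ (p = 3 ∧ q = 2)) (P : Sylow p G)
    (hP : (P : Subgroup G).index = q ^ 2) : (P : Subgroup G).Normal := by
  have hcard : Nat.card (Sylow p G) = 1 :=
    Nat.eq_one_of_dvd_sq_of_modEq_one Fact.out hq hpq hne (hP ▸ P.card_dvd_index)
      (card_sylow_modEq_one p G)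
  have : Subsingleton (Sylow p G) := (Nat.card_eq_one_iff_unique.mp hcard).1
  exact P.normal_of_subsingleton

theorem isCyclic_mulAut_of_card_prime (H : Type*) [Group H] (h : (Nat.card H).Prime) :
    IsCyclic (MulAut H) := by
  have : Fact (Nat.card H).Prime := ⟨h⟩
  have : IsCyclic H := isCyclic_of_prime_card rfl
  exact isCyclic_of_surjective (IsCyclic.mulAutMulEquiv H).symm (MulEquiv.surjective _)

theorem MulAut.ker_conjNormal (H : Subgroup G) [H.Normal] :
    (MulAut.conjNormal : G →* MulAut H).ker = centralizer (H : Set G) := by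
  ext g
  simp only [MonoidHom.mem_ker, mem_centralizer_iff, MulEquiv.ext_iff, Subtype.ext_iff,
    MulAut.conjNormal_apply, MulAut.one_apply, Subtype.forall]
  refine forall₂_congr fun h _ => ?_
  rw [mul_inv_eq_iff_eq_mul, eq_comm]

theorem isCyclic_quotient_centralizer (H : Subgroup G) [H.Normal] [IsCyclic (MulAut H)] :
    IsCyclic (G ⧸ centralizer (H : Set G)) := by
  let e := (QuotientGroup.quotientMulEquivOfEq (MulAut.ker_conjNormal H)).symm.trans
    (QuotientGroup.quotientKerEquivRange MulAut.conjNormal)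
  exact isCyclic_of_surjective e.symm e.symm.surjective

theorem Group.isMetacyclic_of_isCyclic_centralizer (H : Subgroup G) [H.Normal]
    [IsCyclic (MulAut H)] [IsCyclic (centralizer (H : Set G))] : IsMetacyclic G :=
  ⟨centralizer (H : Set G), inferInstance, inferInstance, isCyclic_quotient_centralizer H⟩

theorem Group.isMetacyclic_of_index_eq_minFac (N : Subgroup G) [IsCyclic N]
    (hN : N.index = (Nat.card G).minFac) : IsMetacyclic G := by
  have := normal_of_index_eq_minFac_card hN
  refine ⟨N, this, inferInstance, ?_⟩
  by_cases hG : Nat.card G = 1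
  · rw [hG, Nat.minFac_one, index_eq_card, Nat.card_eq_one_iff_unique] at hN
    exact @isCyclic_of_subsingleton _ _ hN.1
  · rw [index_eq_card] at hN
    have := Fact.mk (Nat.minFac_prime hG)
    exact isCyclic_of_prime_card hN

theorem Group.isMetacyclic_of_mem_center [Finite G] {p q : ℕ} (hp : p.Prime) (hq : q.Prime)
    (hpq : q < p) (hG : Nat.card G = p * q ^ 2) {a : G} (ha : a ∈ center G)
    (hpa : orderOf a = p) : IsMetacyclic G := by
  have := Fact.mk hq
  obtain ⟨b, hqb⟩ := exists_prime_orderOf_dvd_card' (G := G) q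
    (hG ▸ dvd_mul_of_dvd_right (dvd_pow_self q two_ne_zero) p)
  have hab : orderOf (a * b) = p * q := by
    have hcomm : Commute a b := (mem_center_iff.mp ha b).symm
    rw [hcomm.orderOf_mul_eq_mul_orderOf_of_coprime
      (hpa ▸ hqb ▸ (Nat.coprime_primes hp hq).mpr hpq.ne'), hpa, hqb]
  have hindex : (zpowers (a * b)).index = q := by
    have := (zpowers (a * b)).card_mul_index
    rw [Nat.card_zpowers, hab, hG, pow_two, ← mul_assoc] at this
    exact Nat.eq_of_mul_eq_mul_left (Nat.mul_pos hp.pos hq.pos) this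
  rw [← Nat.minFac_mul_sq_of_lt hp hq hpq, ← hG] at hindex
  exact isMetacyclic_of_index_eq_minFac _ hindex

open scoped IsMulCommutative in
theorem isCyclic_of_dvd_card_center_of_card_dvd [Finite G] {p q : ℕ} (hp : p.Prime)
    (hq : q.Prime) (hpq : p ≠ q) (hZ : p ∣ Nat.card (center G)) (hG : Nat.card G ∣ p * q) :
    IsCyclic G := by
  have := Fact.mk hq
  have hquot : Nat.card (G ⧸ center G) ∣ q := by
    refine Nat.dvd_of_mul_dvd_mul_right hp.pos ?_
    rw [mul_comm q]
    exact (mul_dvd_mul_left _ hZ).trans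
      ((card_eq_card_quotient_mul_card_subgroup (center G)).symm ▸ hG)
  have := isCyclic_of_card_dvd_prime hquot
  have := (QuotientGroup.mk' (center G)).isMulCommutative_of_isCyclic_of_ker_le_center
    (QuotientGroup.ker_mk' _).le
  have hsq : Squarefree (p * q) := Nat.squarefree_mul_iff.mpr
    ⟨(Nat.coprime_primes hp hq).mpr hpq, hp.squarefree, hq.squarefree⟩
  have : IsZGroup G := IsZGroup.of_squarefree (hsq.squarefree_of_dvd hG)
  exact IsCyclic.of_exponent_eq_card (IsZGroup.exponent_eq_card G)

theorem isCyclic_centralizer_of_ne_top [Finite G] {p q : ℕ} (hp : p.Prime) (hq : q.Prime)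
    (hpq : p ≠ q) (P : Subgroup G) (hP : Nat.card P = p) (hPi : P.index = q ^ 2)
    (hC : centralizer (P : Set G) ≠ ⊤) : IsCyclic (centralizer (P : Set G)) := by
  set C := centralizer (P : Set G)
  have := Fact.mk hp
  have : IsCyclic P := isCyclic_of_prime_card hP
  have hPC : P ≤ C := le_centralizer P
  have hqC : q ∣ C.index := by
    obtain ⟨k, hk, hCk⟩ := (Nat.dvd_prime_pow hq).mp (hPi ▸ index_dvd_of_le hPC)
    rcases k with _ | k
    · exact absurd (index_eq_one.mp hCk) hC
    · exact hCk ▸ dvd_pow_self q k.succ_ne_zero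
  have hCdvd : Nat.card C ∣ p * q := by
    obtain ⟨m, hm⟩ := hqC
    have := C.card_mul_index
    rw [hm, ← P.card_mul_index, hP, hPi, pow_two, ← mul_assoc, ← mul_assoc] at this
    exact Dvd.intro m (Nat.eq_of_mul_eq_mul_right hq.pos (by linarith))
  refine isCyclic_of_dvd_card_center_of_card_dvd hp hq hpq ?_ hCdvd
  have hcenter : P.subgroupOf C ≤ center C := fun x hx =>
    mem_center_iff.mpr fun g => Subtype.ext (mem_centralizer_iff.mp g.2 x hx).symm
  exact hP ▸ Nat.card_congr (subgroupOfEquivOfLe hPC).toEquiv ▸ card_dvd_of_le hcenter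

end

/-- Let `p > q` be primes with `(p, q) ≠ (3, 2)`. Then every group of order `p * q ^ 2` is
metacyclic: it has a cyclic normal subgroup with cyclic quotient. -/
theorem stmt_5 (p q : ℕ) (hp : p.Prime) (hq : q.Prime) (hpq : q < p)
    (hne : ¬ (p = 3 ∧ q = 2)) (G : Type) [Group G] [Finite G]
    (hG : Nat.card G = p * q ^ 2) :
    ∃ (N : Subgroup G) (_ : N.Normal), IsCyclic N ∧ IsCyclic (G ⧸ N) := by
  have := Fact.mk hp
  obtain ⟨P⟩ : Nonempty (Sylow p G) := inferInstance
  have hcardP : Nat.card P = p := P.card_eq_of_card_eq_mul hG fun h =>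
    hpq.ne' ((Nat.prime_dvd_prime_iff_eq hp hq).mp (hp.dvd_of_dvd_pow h))
  have hindexP : (P : Subgroup G).index = q ^ 2 := by
    have := (P : Subgroup G).card_mul_index
    rw [hcardP, hG] at this
    exact Nat.eq_of_mul_eq_mul_left hp.pos this
  have := P.normal_of_index_eq_sq hq hpq hne hindexP
  by_cases hC : centralizer (P : Set G) = ⊤
  · obtain ⟨a, ha⟩ := exists_prime_orderOf_dvd_card' (G := P) p (by rw [hcardP])
    exact Group.isMetacyclic_of_mem_center hp hq hpq hG
      (centralizer_eq_top_iff_subset.mp hC a.2) ((orderOf_coe a).trans ha)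
  · have := isCyclic_mulAut_of_card_prime (P : Subgroup G) (by rwa [hcardP])
    have := isCyclic_centralizer_of_ne_top hp hq hpq.ne' (P : Subgroup G) hcardP hindexP hC
    exact Group.isMetacyclic_of_isCyclic_centralizer (P : Subgroup G)
end

section
/- For primes p > q, every group of order p·q^2 is 2-generated. -/
open Subgroup

lemma aux_top {G : Type*} [Group G] [Finite G] (H : Subgroup G)
    (h : Nat.card G ∣ Nat.card H) : H = ⊤ :=
  Subgroup.eq_top_of_card_eq _ (Nat.dvd_antisymm H.card_subgroup_dvd_card h)

lemma aux_exists_comm {p q : ℕ} (hp : p.Prime) (hq : q.Prime)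
    {G : Type*} [Group G] [Finite G] {a : G} (ha : orderOf a = p)
    (hnorm : ∀ g : G, g * a * g⁻¹ ∈ zpowers a) (Q : Subgroup G)
    (hcardQ : Nat.card Q = q ^ 2) (hexp : ∀ g ∈ Q, g ^ q = 1) :
    ∃ k ∈ Q, k ≠ 1 ∧ a * k = k * a := by
  haveI : Fact p.Prime := ⟨hp⟩
  by_contra hcon
  push_neg at hcon
  have hν : ∀ g : G, ∃ n : ℤ, a ^ n = g * a * g⁻¹ := fun g =>
    Subgroup.mem_zpowers_iff.mp (hnorm g)
  choose ν hν using hν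
  set X : G → ZMod p := fun g => ((ν g : ℤ) : ZMod p) with hX
  have apow : ∀ m k : ℤ, a ^ m = a ^ k ↔ ((m : ZMod p) = (k : ZMod p)) := by
    intro m k
    rw [zpow_eq_zpow_iff_modEq, ha, ZMod.intCast_eq_intCast_iff]
  have hmul : ∀ g h : G, X (g * h) = X g * X h := by
    intro g h
    have : a ^ ν (g * h) = a ^ (ν g * ν h) := by
      rw [zpow_mul]
      calc a ^ ν (g * h) = g * h * a * (g * h)⁻¹ := hν _
        _ = g * (h * a * h⁻¹) * g⁻¹ := by group
        _ = g * a ^ ν h * g⁻¹ := by rw [← hν]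
        _ = (g * a * g⁻¹) ^ ν h := by rw [conj_zpow]
        _ = (a ^ ν g) ^ ν h := by rw [← hν]
    simpa only [hX, Int.cast_mul] using (apow _ _).mp this
  have hone : X 1 = 1 := by
    have : a ^ ν (1 : G) = a ^ (1 : ℤ) := by
      rw [hν, zpow_one]; group
    simpa using (apow _ _).mp this
  have hpow : ∀ (g : G) (j : ℕ), X (g ^ j) = X g ^ j := by
    intro g j
    induction j with
    | zero => simpa using hone
    | succ n ih => rw [pow_succ, pow_succ, hmul, ih]
  -- injective map from Q into q-th roots of unity in ZMod p
  have hinj : Function.Injective (fun g : ↥Q => X ↑g) := by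
    intro g₁ g₂ hgg
    have he : (g₁ : G) * a * (g₁ : G)⁻¹ = (g₂ : G) * a * (g₂ : G)⁻¹ := by
      rw [← hν, ← hν]
      exact (apow _ _).mpr hgg
    by_contra hne
    set c : G := (g₂ : G)⁻¹ * g₁ with hc
    have hcQ : c ∈ Q := mul_mem (inv_mem g₂.2) g₁.2
    have hc1 : c ≠ 1 := by
      intro h
      exact hne (Subtype.ext (by rwa [hc, inv_mul_eq_one, eq_comm] at h))
    have h2 : c * a * c⁻¹ = a := by
      calc c * a * c⁻¹ = (g₂ : G)⁻¹ * ((g₁ : G) * a * (g₁ : G)⁻¹) * g₂ := by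
            rw [hc]; group
        _ = (g₂ : G)⁻¹ * ((g₂ : G) * a * (g₂ : G)⁻¹) * g₂ := by rw [he]
        _ = a := by group
    have h3 : a * c = c * a := by
      rw [mul_inv_eq_iff_eq_mul] at h2
      exact h2.symm
    exact hcon c hcQ hc1 h3
  have hroot : ∀ g : ↥Q, X ↑g ∈ (Polynomial.nthRoots q (1 : ZMod p)).toFinset := by
    intro g
    rw [Multiset.mem_toFinset, Polynomial.mem_nthRoots hq.pos]
    rw [← hpow, hexp _ g.2, hone]
  have hcard : Nat.card ↥Q ≤ q := by
    have h1 : Nat.card ↥Q ≤ Nat.card {x : ZMod p // x ∈ (Polynomial.nthRoots q (1 : ZMod p)).toFinset} := by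
      apply Nat.card_le_card_of_injective (fun g : ↥Q => (⟨X ↑g, hroot g⟩ : {x : ZMod p // x ∈ (Polynomial.nthRoots q (1 : ZMod p)).toFinset}))
      intro g₁ g₂ h
      exact hinj (congrArg Subtype.val h)
    refine h1.trans ?_
    rw [Nat.card_eq_fintype_card, Fintype.card_coe]
    exact (Multiset.toFinset_card_le _).trans (Polynomial.card_nthRoots q 1)
  rw [hcardQ] at hcard
  have := hq.two_le
  nlinarith


/-- For primes `p > q`, every group of order `p * q ^ 2` is 2-generated. -/
theorem stmt_9 (p q : ℕ) (hp : p.Prime) (hq : q.Prime) (hpq : q < p)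
    (G : Type) [Group G] [Finite G] (hG : Nat.card G = p * q ^ 2) :
    ∃ a b : G, Subgroup.closure {a, b} = ⊤ := by
  haveI hpf : Fact p.Prime := ⟨hp⟩
  haveI hqf : Fact q.Prime := ⟨hq⟩
  have hq1 : 1 < q := hq.one_lt
  have hp1 : 1 < p := hp.one_lt
  have hne : p ≠ q := (hpq.trans_le le_rfl).ne'
  have hndvd : ¬ p ∣ q := fun h => hne ((Nat.prime_dvd_prime_iff_eq hp hq).mp h)
  have hcop : Nat.Coprime p (q ^ 2) := (Nat.coprime_primes hp hq).mpr hne |>.pow_right 2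
  -- factorizations
  have hfp : (p * q ^ 2).factorization p = 1 := by
    rw [Nat.factorization_mul hp.ne_zero (pow_ne_zero 2 hq.ne_zero), Nat.factorization_pow]
    simp [hp.factorization, hq.factorization, Finsupp.single_apply, hne, Ne.symm hne]
  have hfq : (p * q ^ 2).factorization q = 2 := by
    rw [Nat.factorization_mul hp.ne_zero (pow_ne_zero 2 hq.ne_zero), Nat.factorization_pow]
    simp [hp.factorization, hq.factorization, Finsupp.single_apply, hne, Ne.symm hne]
  -- a Sylow p-subgroup and its generator
  obtain ⟨P₀⟩ := (Sylow.nonempty : Nonempty (Sylow p G))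
  have hcardP : Nat.card P₀ = p := by
    rw [P₀.card_eq_multiplicity, hG, hfp, pow_one]
  obtain ⟨a', ha'⟩ := exists_prime_orderOf_dvd_card' (G := ↥(P₀ : Subgroup G)) p
    (by rw [hcardP])
  set a : G := (a' : G) with haa
  have haord : orderOf a = p := by
    rw [haa, Subgroup.orderOf_coe, ha']
  have haP : a ∈ (P₀ : Subgroup G) := SetLike.coe_mem a'
  have hZP : zpowers a = (P₀ : Subgroup G) := by
    apply Subgroup.eq_of_le_of_card_ge (zpowers_le.mpr haP)
    rw [hcardP, Nat.card_zpowers, haord]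
  have hidx : (P₀ : Subgroup G).index = q ^ 2 := by
    have h1 := Subgroup.card_mul_index (P₀ : Subgroup G)
    rw [hcardP, hG] at h1
    exact Nat.eq_of_mul_eq_mul_left (by omega) h1
  -- number of Sylow p-subgroups
  have hn1 : Nat.card (Sylow p G) ≡ 1 [MOD p] := card_sylow_modEq_one p G
  have hndvd2 : Nat.card (Sylow p G) ∣ q ^ 2 := by
    have := P₀.card_dvd_index
    rwa [hidx] at this
  obtain ⟨i, hi2, hni⟩ := (Nat.dvd_prime_pow hq).mp hndvd2
  have hq_ne_one_mod : ¬ (q ≡ 1 [MOD p]) := by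
    intro h
    have : q % p = 1 % p := h
    rw [Nat.mod_eq_of_lt hpq, Nat.mod_eq_of_lt hp1] at this
    omega
  interval_cases i
  · -- n = 1 : P₀ is normal
    rw [pow_zero] at hni
    have hnorm : (P₀ : Subgroup G).Normal := by
      rw [← Subgroup.normalizer_eq_top_iff, ← Subgroup.index_eq_one, P₀.coe_coe,
        ← Sylow.card_eq_index_normalizer P₀, hni]
    by_cases hb2 : ∃ b : G, orderOf b = q ^ 2
    · obtain ⟨b, hb⟩ := hb2
      refine ⟨a, b, aux_top _ ?_⟩
      rw [hG]
      apply hcop.mul_dvd_of_dvd_of_dvd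
      · rw [← haord]
        exact Subgroup.orderOf_dvd_natCard _ (subset_closure (by simp))
      · rw [← hb]
        exact Subgroup.orderOf_dvd_natCard _ (subset_closure (by simp))
    · -- no element of order q²
      push_neg at hb2
      obtain ⟨Q₀⟩ := (Sylow.nonempty : Nonempty (Sylow q G))
      have hcardQ : Nat.card Q₀ = q ^ 2 := by
        rw [Q₀.card_eq_multiplicity, hG, hfq]
      have hexp : ∀ g ∈ (Q₀ : Subgroup G), g ^ q = 1 := by
        intro g hg
        apply orderOf_dvd_iff_pow_eq_one.mp
        have hdvd : orderOf g ∣ q ^ 2 := by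
          rw [← hcardQ]; exact Subgroup.orderOf_dvd_natCard _ hg
        obtain ⟨j, hj2, hjv⟩ := (Nat.dvd_prime_pow hq).mp hdvd
        interval_cases j
        · simp [hjv]
        · simpa using hjv.dvd
        · exact absurd hjv (by rw [pow_two] at hjv ⊢; exact hb2 g ∘ (by rw [pow_two]; exact ·))
      have hconj : ∀ g : G, g * a * g⁻¹ ∈ zpowers a := by
        intro g
        rw [hZP]
        exact hnorm.conj_mem a haP g
      obtain ⟨k, hkQ, hk1, hka⟩ := aux_exists_comm hp hq haord hconj Q₀ hcardQ hexp
      have hok : orderOf k = q := by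
        have h1 : orderOf k ∣ q := orderOf_dvd_of_pow_eq_one (hexp k hkQ)
        rcases (Nat.dvd_prime hq).mp h1 with h | h
        · exact absurd (orderOf_eq_one_iff.mp h) hk1
        · exact h
      have hzk : zpowers k ≤ (Q₀ : Subgroup G) := zpowers_le.mpr hkQ
      have hb : ∃ b ∈ (Q₀ : Subgroup G), b ∉ zpowers k := by
        by_contra h
        push_neg at h
        have hle : (Q₀ : Subgroup G) ≤ zpowers k := h
        have := Subgroup.card_le_of_le hle
        rw [hcardQ, Nat.card_zpowers, hok] at this
        nlinarith
      obtain ⟨b, hbQ, hbk⟩ := hb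
      refine ⟨a * k, b, ?_⟩
      set H := Subgroup.closure {a * k, b} with hH
      have hu : a * k ∈ H := subset_closure (by simp)
      have hbH : b ∈ H := subset_closure (by simp)
      have hcomm : Commute a k := hka
      have haqH : a ^ q ∈ H := by
        have : (a * k) ^ q = a ^ q * k ^ q := hcomm.mul_pow q
        rw [hexp k hkQ, mul_one] at this
        rw [← this]
        exact pow_mem hu q
      have haH : a ∈ H := by
        obtain ⟨m, hm⟩ := exists_pow_eq_self_of_coprime
          (x := a) (n := q) (by rw [haord]; exact ((Nat.coprime_primes hq hp).mpr (Ne.symm hne)))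
        rw [← hm]
        exact pow_mem haqH m
      have hkH : k ∈ H := by
        have : k = a⁻¹ * (a * k) := by group
        rw [this]
        exact mul_mem (inv_mem haH) hu
      apply aux_top
      rw [hG]
      apply hcop.mul_dvd_of_dvd_of_dvd
      · rw [← haord]
        exact Subgroup.orderOf_dvd_natCard _ haH
      · -- q² divides card H via closure {k, b}
        set K2 := Subgroup.closure ({k, b} : Set G) with hK2
        have hK2H : K2 ≤ H := by
          rw [hK2]
          apply Subgroup.closure_le _ |>.mpr
          intro x hx
          rcases hx with h | h
          · rw [h]; exact hkH
          · rw [Set.mem_singleton_iff.mp h]; exact hbH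
        have hK2Q : K2 ≤ (Q₀ : Subgroup G) := by
          rw [hK2]
          apply Subgroup.closure_le _ |>.mpr
          intro x hx
          rcases hx with h | h
          · rw [h]; exact hkQ
          · rw [Set.mem_singleton_iff.mp h]; exact hbQ
        have hqK2 : q ∣ Nat.card K2 := by
          rw [← hok]
          exact Subgroup.orderOf_dvd_natCard _ (subset_closure (by simp))
        have hK2d : Nat.card K2 ∣ q ^ 2 := by
          rw [← hcardQ]
          exact Subgroup.card_le_of_le hK2Q |> fun _ => Subgroup.card_dvd_of_le hK2Q
        have hK2card : Nat.card K2 = q ^ 2 := by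
          obtain ⟨j, hj2, hjv⟩ := (Nat.dvd_prime_pow hq).mp hK2d
          interval_cases j
          · rw [pow_zero] at hjv
            rw [hjv, Nat.dvd_one] at hqK2
            omega
          · exfalso
            rw [pow_one] at hjv
            have hzkK2 : zpowers k ≤ K2 := zpowers_le.mpr (subset_closure (by simp))
            have : zpowers k = K2 := by
              apply Subgroup.eq_of_le_of_card_ge hzkK2
              rw [hjv, Nat.card_zpowers, hok]
            exact hbk (this ▸ subset_closure (by simp : b ∈ ({k, b} : Set G)))
          · exact hjv
        rw [← hK2card]
        exact Subgroup.card_dvd_of_le hK2H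
  · -- n = q : impossible
    exfalso
    rw [pow_one] at hni
    exact hq_ne_one_mod (hni ▸ hn1)
  · -- n = q² : normalizer has order p
    have hNindex : (normalizer ((P₀ : Subgroup G) : Set G)).index = q ^ 2 := by
      rw [P₀.coe_coe, ← Sylow.card_eq_index_normalizer P₀, hni]
    have hNcard : Nat.card (normalizer ((P₀ : Subgroup G) : Set G)) = p := by
      have h1 := Subgroup.card_mul_index (normalizer ((P₀ : Subgroup G) : Set G))
      rw [hNindex, hG] at h1
      exact Nat.eq_of_mul_eq_mul_right (by positivity) h1
    obtain ⟨b, hob⟩ := exists_prime_orderOf_dvd_card' (G := G) q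
      (by rw [hG]; exact Dvd.dvd.mul_left (dvd_pow_self q two_ne_zero) p)
    refine ⟨a, b, ?_⟩
    set H := Subgroup.closure ({a, b} : Set G) with hH
    have haH : a ∈ H := subset_closure (by simp)
    have hbH : b ∈ H := subset_closure (by simp)
    have hpd : p ∣ Nat.card H := by
      rw [← haord]; exact Subgroup.orderOf_dvd_natCard _ haH
    have hqd : q ∣ Nat.card H := by
      rw [← hob]; exact Subgroup.orderOf_dvd_natCard _ hbH
    have hpqd : p * q ∣ Nat.card H :=
      (Nat.Coprime.mul_dvd_of_dvd_of_dvd ((Nat.coprime_primes hp hq).mpr hne) hpd hqd)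
    have hHd : Nat.card H ∣ p * q ^ 2 := by rw [← hG]; exact H.card_subgroup_dvd_card
    obtain ⟨e, he⟩ := hpqd
    have hed : e ∣ q := by
      have h1 : p * q * e ∣ p * q * q := by
        rw [← he]
        have h2 : p * q * q = p * q ^ 2 := by ring
        rw [h2]
        exact hHd
      exact (mul_dvd_mul_iff_left (by positivity : p * q ≠ 0)).mp h1
    rcases (Nat.dvd_prime hq).mp hed with he1 | heq
    · -- card H = p * q : contradiction via normalizer
      exfalso
      rw [he1, mul_one] at he
      -- Sylow p-subgroup of H
      have haH' : orderOf (⟨a, haH⟩ : ↥H) = p := by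
        rw [Subgroup.orderOf_mk, haord]
      have hPG : IsPGroup p ↥(zpowers (⟨a, haH⟩ : ↥H)) := by
        apply IsPGroup.of_card
        rw [Nat.card_zpowers, haH', pow_one]
      obtain ⟨PH, hlePH⟩ := hPG.exists_le_sylow
      have hfpq : (p * q).factorization p = 1 := by
        rw [Nat.factorization_mul hp.ne_zero hq.ne_zero]
        simp [hp.factorization, hq.factorization, Finsupp.single_apply, hne, Ne.symm hne]
      have hcardPH : Nat.card PH = p := by
        rw [PH.card_eq_multiplicity, he, hfpq, pow_one]
      have hPHidx : (PH : Subgroup ↥H).index = q := by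
        have h1 := Subgroup.card_mul_index (PH : Subgroup ↥H)
        rw [hcardPH, he] at h1
        exact Nat.eq_of_mul_eq_mul_left (by omega) h1
      have hnH : Nat.card (Sylow p ↥H) = 1 := by
        have h1 : Nat.card (Sylow p ↥H) ∣ q := by
          have := PH.card_dvd_index
          rwa [hPHidx] at this
        rcases (Nat.dvd_prime hq).mp h1 with h | h
        · exact h
        · exact absurd (h ▸ card_sylow_modEq_one p ↥H) hq_ne_one_mod
      have hPHnorm : (PH : Subgroup ↥H).Normal := by
        rw [← Subgroup.normalizer_eq_top_iff, ← Subgroup.index_eq_one, PH.coe_coe,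
          ← Sylow.card_eq_index_normalizer PH, hnH]
      have hzPH : zpowers (⟨a, haH⟩ : ↥H) = (PH : Subgroup ↥H) := by
        apply Subgroup.eq_of_le_of_card_ge hlePH
        rw [hcardPH, Nat.card_zpowers, haH']
      -- every element of H normalizes P₀
      have haux : ∀ h ∈ H, ∀ x ∈ (P₀ : Subgroup G), h * x * h⁻¹ ∈ (P₀ : Subgroup G) := by
        intro h hh x hx
        rw [← hZP] at hx ⊢
        obtain ⟨m, hm⟩ := Subgroup.mem_zpowers_iff.mp hx
        have h1 : (⟨h, hh⟩ : ↥H) * (⟨a, haH⟩ : ↥H) ^ m * (⟨h, hh⟩ : ↥H)⁻¹ ∈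
            (PH : Subgroup ↥H) :=
          hPHnorm.conj_mem _ (hzPH ▸ zpow_mem (mem_zpowers _) m) _
        rw [← hzPH] at h1
        obtain ⟨t, ht⟩ := Subgroup.mem_zpowers_iff.mp h1
        apply Subgroup.mem_zpowers_iff.mpr
        refine ⟨t, ?_⟩
        have := congrArg (Subgroup.subtype H) ht
        simp only [map_mul, map_zpow, map_inv] at this
        simpa [hm] using this
      have hlenorm : H ≤ (normalizer ((P₀ : Subgroup G) : Set G)) := by
        intro h hh
        rw [Subgroup.mem_normalizer_iff]
        intro x
        constructor
        · exact fun hx => haux h hh x hx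
        · intro hx
          have := haux h⁻¹ (inv_mem hh) _ hx
          simpa [mul_assoc] using this
      have hcd := Subgroup.card_dvd_of_le hlenorm
      rw [he, hNcard] at hcd
      have h3 : p * q ∣ p * 1 := by rwa [mul_one]
      have : q ∣ 1 := (Nat.mul_dvd_mul_iff_left (by omega : 0 < p)).mp h3
      rw [Nat.dvd_one] at this
      omega
    · rw [heq] at he
      apply aux_top
      rw [hG, he]
      apply dvd_of_eq
      ring
end

section
/- Let p > q be primes with q dividing p − 1. Then there exists a group of order p^2·q that cannot be generated by two elements; for example, the semidirect product (Z_p × Z_p) ⋊ Z_q where a generator of Z_q acts by scalar multiplication by a fixed element a of multiplicative order q in (Z/pZ)^*. -/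
/-! A generator `g₁` with nontrivial `ℤ_q`-component acts on `ℤ_p × ℤ_p` by a scalar `b ≠ 1`, so
conjugating by a translation moves it into `ℤ_q`. As `ℤ_q` acts by scalars, `L ⋊ ℤ_q` is a
subgroup for every line `L`, and the line through the translation part of the conjugated `g₂`
gives a proper subgroup containing both conjugated generators. If neither generator has a
`ℤ_q`-component, both lie in the proper subgroup `ℤ_p × ℤ_p`. -/

open SemidirectProduct Multiplicative

theorem pow_val_eq_one_iff {M : Type*} [Monoid M] {a : M} {n : ℕ} [NeZero n]
    (ha : orderOf a = n) (z : ZMod n) : a ^ z.val = 1 ↔ z = 0 := by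
  rw [← orderOf_dvd_iff_pow_eq_one, ha, ← ZMod.natCast_eq_zero_iff, ZMod.natCast_zmod_val]

theorem Submodule.span_singleton_ne_top_of_one_lt_finrank {K V : Type*} [DivisionRing K]
    [AddCommGroup V] [Module K V] (hV : 1 < Module.finrank K V) (v : V) : K ∙ v ≠ ⊤ :=
  (span_lt_top_of_card_lt_finrank (s := {v}) (by simpa using hV)).ne

namespace SemidirectProduct

theorem closure_ne_top_of_forall_right_eq_one {N G : Type*} [Group N] [Group G] [Nontrivial G]
    {φ : G →* MulAut N} {S : Set (N ⋊[φ] G)} (hS : ∀ g ∈ S, g.right = 1) :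
    Subgroup.closure S ≠ ⊤ := by
  intro htop
  obtain ⟨c, hc⟩ := exists_ne (1 : G)
  have hle : Subgroup.closure S ≤ (rightHom : N ⋊[φ] G →* G).ker :=
    (Subgroup.closure_le _).mpr fun g hg => hS g hg
  have hc_ker : inr c ∈ (rightHom : N ⋊[φ] G →* G).ker := hle (htop ▸ Subgroup.mem_top _)
  exact hc (by simpa using hc_ker)

variable {K V C : Type*} [Field K] [AddCommGroup V] [Module K V] [Group C]
  {φ : C →* MulAut (Multiplicative V)} {s : C → K}

def submoduleSubgroup (hφ : ∀ c x, toAdd (φ c x) = s c • toAdd x) (L : Submodule K V) :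
    Subgroup (Multiplicative V ⋊[φ] C) where
  carrier := {g | toAdd g.left ∈ L}
  one_mem' := L.zero_mem
  mul_mem' {g h} hg hh := by
    simp only [Set.mem_ofPred_eq, mul_left, toAdd_mul, hφ] at hg hh ⊢
    exact L.add_mem hg (L.smul_mem _ hh)
  inv_mem' {g} hg := by
    simp only [Set.mem_ofPred_eq, inv_left, toAdd_inv, hφ] at hg ⊢
    exact L.smul_mem _ (L.neg_mem hg)

theorem exists_conj_left_eq_one (hφ : ∀ c x, toAdd (φ c x) = s c • toAdd x)
    {g : Multiplicative V ⋊[φ] C} (hg : s g.right ≠ 1) :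
    ∃ n : Multiplicative V ⋊[φ] C, (n * g * n⁻¹).left = 1 := by
  refine ⟨inl (ofAdd ((s g.right - 1)⁻¹ • toAdd g.left)), toAdd.injective ?_⟩
  have h : s g.right - 1 ≠ 0 := sub_ne_zero.mpr hg
  simp only [mul_left, mul_right, inv_left, left_inl, right_inl, map_one, MulAut.one_apply, inv_one,
    one_mul, toAdd_mul, toAdd_inv, hφ, toAdd_ofAdd, toAdd_one, smul_neg, smul_smul]
  have hcoeff : (s g.right - 1)⁻¹ + 1 - s g.right * (s g.right - 1)⁻¹ = 0 := by
    field_simp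
    ring
  linear_combination (norm := module) hcoeff • toAdd g.left

theorem closure_pair_ne_top_of_ne_one (hφ : ∀ c x, toAdd (φ c x) = s c • toAdd x)
    (hV : ∀ v : V, K ∙ v ≠ ⊤) {g₁ : Multiplicative V ⋊[φ] C} (hg₁ : s g₁.right ≠ 1)
    (g₂ : Multiplicative V ⋊[φ] C) : Subgroup.closure {g₁, g₂} ≠ ⊤ := by
  obtain ⟨n, hn⟩ := exists_conj_left_eq_one hφ hg₁
  let e := (MulAut.conj n).toMonoidHom
  obtain ⟨v, -, hv⟩ := SetLike.exists_of_lt (hV (toAdd (e g₂).left)).lt_top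
  let H := (submoduleSubgroup hφ (K ∙ toAdd (e g₂).left)).comap e
  have hle : Subgroup.closure {g₁, g₂} ≤ H := by
    rw [Subgroup.closure_le, Set.insert_subset_iff, Set.singleton_subset_iff]
    constructor
    · show toAdd (n * g₁ * n⁻¹).left ∈ K ∙ toAdd (e g₂).left
      rw [hn, toAdd_one]
      exact Submodule.zero_mem _
    · exact Submodule.mem_span_singleton_self _
  intro htop
  have hmem := hle (htop ▸ Subgroup.mem_top ((MulAut.conj n).symm (inl (ofAdd v))))
  exact hv (by simpa [H, e, submoduleSubgroup] using hmem)

theorem not_exists_closure_pair_eq_top [Nontrivial C]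
    (hφ : ∀ c x, toAdd (φ c x) = s c • toAdd x) (hs : ∀ c, c ≠ 1 → s c ≠ 1)
    (hV : ∀ v : V, K ∙ v ≠ ⊤) :
    ¬ ∃ g₁ g₂ : Multiplicative V ⋊[φ] C, Subgroup.closure {g₁, g₂} = ⊤ := by
  rintro ⟨g₁, g₂, htop⟩
  by_cases h₁ : g₁.right = 1
  · by_cases h₂ : g₂.right = 1
    · exact closure_ne_top_of_forall_right_eq_one (by rintro _ (rfl | rfl) <;> assumption) htop
    · exact closure_pair_ne_top_of_ne_one hφ hV (hs _ h₂) g₁ (Set.pair_comm g₁ g₂ ▸ htop)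
  · exact closure_pair_ne_top_of_ne_one hφ hV (hs _ h₁) g₂ htop

end SemidirectProduct

theorem stmt_11_general (p q : ℕ) [Fact p.Prime] [Fact q.Prime]
    (a : (ZMod p)ˣ) (ha : orderOf a = q)
    (φ : Multiplicative (ZMod q) →* MulAut (Multiplicative (ZMod p × ZMod p)))
    (hφ : ∀ (z : Multiplicative (ZMod q)) (x : Multiplicative (ZMod p × ZMod p)),
      Multiplicative.toAdd (φ z x) =
        ((a : ZMod p) ^ (Multiplicative.toAdd z).val) • Multiplicative.toAdd x) :
    Nat.card (Multiplicative (ZMod p × ZMod p) ⋊[φ] Multiplicative (ZMod q)) = p ^ 2 * q ∧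
    ¬ ∃ g₁ g₂ : Multiplicative (ZMod p × ZMod p) ⋊[φ] Multiplicative (ZMod q),
        Subgroup.closure {g₁, g₂} = ⊤ := by
  refine ⟨?_, not_exists_closure_pair_eq_top hφ (fun z hz => ?_)
    (Submodule.span_singleton_ne_top_of_one_lt_finrank ?_)⟩
  · simp [SemidirectProduct.card, Nat.card_eq_fintype_card, sq]
  · rwa [Ne, pow_val_eq_one_iff (orderOf_units.trans ha)]
  · simp [Module.finrank_prod]

/-- Let `p > q` be primes with `q ∣ p - 1`. Then the semidirect product
`(ℤ_p × ℤ_p) ⋊ ℤ_q`, where a generator of `ℤ_q` acts by scalar multiplication by a fixed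
element `a` of multiplicative order `q` in `(ℤ/pℤ)ˣ`, is a group of order `p ^ 2 * q` that
cannot be generated by two elements. -/
theorem stmt_11 (p q : ℕ) [Fact p.Prime] [Fact q.Prime] (hpq : q < p) (hdvd : q ∣ p - 1)
    (a : (ZMod p)ˣ) (ha : orderOf a = q)
    (φ : Multiplicative (ZMod q) →* MulAut (Multiplicative (ZMod p × ZMod p)))
    (hφ : ∀ (z : Multiplicative (ZMod q)) (x : Multiplicative (ZMod p × ZMod p)),
      Multiplicative.toAdd (φ z x) =
        ((a : ZMod p) ^ (Multiplicative.toAdd z).val) • Multiplicative.toAdd x) :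
    Nat.card (Multiplicative (ZMod p × ZMod p) ⋊[φ] Multiplicative (ZMod q)) = p ^ 2 * q ∧
    ¬ ∃ g₁ g₂ : Multiplicative (ZMod p × ZMod p) ⋊[φ] Multiplicative (ZMod q),
        Subgroup.closure {g₁, g₂} = ⊤ :=
  stmt_11_general p q a ha φ hφ
end

section
/- Let p > q be primes, q dividing p − 1, a ∈ (Z/pZ)^* of order q, and G = (Z_p × Z_p) ⋊_φ Z_q with φ_z acting as scalar multiplication by a^z. Then G contains no element of order p·q. -/
/-!
If `g` had order `p q`, then `g ^ q` would be a nontrivial element of the normal subgroup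
`ℤ_p × ℤ_p`, and `g ^ p` an element of order `q` commuting with it. Conjugation by `g ^ p` acts
on `ℤ_p × ℤ_p` by a scalar `a ^ k` and fixes the nonzero vector `g ^ q`, so `a ^ k = 1`, i.e.
`g ^ p` also lies in `ℤ_p × ℤ_p`. But there every element has order dividing `p`, while `g ^ p`
has order `q`.
-/

namespace ZModModule

variable {n : ℕ} {V : Type*} [AddCommGroup V] [Module (ZMod n) V]

theorem pow_char_eq_one (v : Multiplicative V) : v ^ n = 1 :=
  Multiplicative.toAdd.injective (by simp [toAdd_pow, char_nsmul_eq_zero])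

theorem orderOf_dvd_char (v : Multiplicative V) : orderOf v ∣ n :=
  orderOf_dvd_of_pow_eq_one (pow_char_eq_one v)

end ZModModule

theorem eq_zero_of_pow_val_smul_eq_self {K V : Type*} [Field K] [AddCommGroup V] [Module K V]
    {q : ℕ} [NeZero q] {a : Kˣ} (ha : orderOf a = q) {z : ZMod q} {v : V} (hv : v ≠ 0)
    (h : (a : K) ^ z.val • v = v) : z = 0 := by
  have h_val : (a : K) ^ z.val = 1 := smul_left_injective K hv (by simpa using h)
  have h_dvd : orderOf a ∣ z.val := orderOf_dvd_of_pow_eq_one (Units.ext (by simpa using h_val))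
  rw [ha] at h_dvd
  exact (ZMod.val_eq_zero z).1 (Nat.eq_zero_of_dvd_of_lt h_dvd (ZMod.val_lt z))

namespace SemidirectProduct

section

variable {N G : Type*} [Group N] [Group G] {φ : G →* MulAut N}

theorem eq_inl_left_of_right_eq_one {g : N ⋊[φ] G} (hg : g.right = 1) : g = inl g.left := by
  ext <;> simp [hg]

theorem orderOf_eq_orderOf_left_of_right_eq_one {g : N ⋊[φ] G} (hg : g.right = 1) :
    orderOf g = orderOf g.left := by
  rw [eq_inl_left_of_right_eq_one hg, left_inl, orderOf_injective inl inl_injective]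

end

theorem apply_eq_self_of_commute_inl {N G : Type*} [CommGroup N] [Group G] {φ : G →* MulAut N}
    {n : N} {g : N ⋊[φ] G} (h : Commute (inl n) g) : φ g.right n = n := by
  have h_left := congrArg left h.eq
  simp only [mul_left, left_inl, right_inl, map_one, MulAut.one_apply] at h_left
  exact mul_left_cancel (h_left.symm.trans (mul_comm _ _))

end SemidirectProduct

theorem stmt_12_general (p q : ℕ) [Fact p.Prime] [Fact q.Prime] (hpq : q < p)
    (a : (ZMod p)ˣ) (ha : orderOf a = q)
    (φ : Multiplicative (ZMod q) →* MulAut (Multiplicative (ZMod p × ZMod p)))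
    (hφ : ∀ (z : Multiplicative (ZMod q)) (x : Multiplicative (ZMod p × ZMod p)),
      Multiplicative.toAdd (φ z x) =
        ((a : ZMod p) ^ (Multiplicative.toAdd z).val) • Multiplicative.toAdd x) :
    ∀ g : Multiplicative (ZMod p × ZMod p) ⋊[φ] Multiplicative (ZMod q),
      orderOf g ≠ p * q := by
  intro g hg
  have hp : p.Prime := Fact.out
  have hq : q.Prime := Fact.out
  have h_order_q : orderOf (g ^ q) = p := by
    rw [orderOf_pow_of_dvd hq.ne_zero (hg ▸ dvd_mul_left q p), hg, Nat.mul_div_cancel _ hq.pos]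
  have h_order_p : orderOf (g ^ p) = q := by
    rw [orderOf_pow_of_dvd hp.ne_zero (hg ▸ dvd_mul_right p q), hg,
      Nat.mul_div_cancel_left _ hp.pos]
  have h_right_q : (g ^ q).right = 1 := by
    rw [← SemidirectProduct.rightHom_eq_right, map_pow]
    exact ZModModule.pow_char_eq_one _
  have h_left_q : Multiplicative.toAdd (g ^ q).left ≠ 0 := fun h => by
    have := SemidirectProduct.orderOf_eq_orderOf_left_of_right_eq_one h_right_q
    rw [h_order_q, toAdd_eq_zero.1 h, orderOf_one] at this
    exact hp.one_lt.ne' this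
  have h_fix : φ (g ^ p).right (g ^ q).left = (g ^ q).left := by
    refine SemidirectProduct.apply_eq_self_of_commute_inl ?_
    rw [← SemidirectProduct.eq_inl_left_of_right_eq_one h_right_q]
    exact (Commute.refl g).pow_pow q p
  have h_right_p : (g ^ p).right = 1 :=
    toAdd_eq_zero.1 (eq_zero_of_pow_val_smul_eq_self ha h_left_q (by rw [← hφ, h_fix]))
  have h_dvd : q ∣ p := by
    rw [← h_order_p, SemidirectProduct.orderOf_eq_orderOf_left_of_right_eq_one h_right_p]
    exact ZModModule.orderOf_dvd_char _
  exact hpq.ne ((Nat.prime_dvd_prime_iff_eq hq hp).1 h_dvd)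

/-- Let `p > q` be primes, `q ∣ p - 1`, `a ∈ (ℤ/pℤ)ˣ` of order `q`, and
`G = (ℤ_p × ℤ_p) ⋊_φ ℤ_q` with `φ z` acting as scalar multiplication by `a ^ z`.
Then `G` contains no element of order `p * q`. -/
theorem stmt_12 (p q : ℕ) [Fact p.Prime] [Fact q.Prime] (hpq : q < p) (hdvd : q ∣ p - 1)
    (a : (ZMod p)ˣ) (ha : orderOf a = q)
    (φ : Multiplicative (ZMod q) →* MulAut (Multiplicative (ZMod p × ZMod p)))
    (hφ : ∀ (z : Multiplicative (ZMod q)) (x : Multiplicative (ZMod p × ZMod p)),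
      Multiplicative.toAdd (φ z x) =
        ((a : ZMod p) ^ (Multiplicative.toAdd z).val) • Multiplicative.toAdd x) :
    ∀ g : Multiplicative (ZMod p × ZMod p) ⋊[φ] Multiplicative (ZMod q),
      orderOf g ≠ p * q :=
  stmt_12_general p q hpq a ha φ hφ
end

section
/- Let p > q be primes with q not dividing p − 1, and let G be a group of order p^2·q whose Sylow p-subgroup is Z_p × Z_p and which has p^2 Sylow q-subgroups. Then G has no subgroup of order p·q. -/
/-!
Let `H` have order `p * q`. Its Sylow `q`-subgroups number a divisor of `p` that is `≡ 1 mod q`,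
so since `q ∤ p - 1` there is just one, normal in `H`. As `H` has index `p` in `G`, this subgroup
is also a Sylow `q`-subgroup `Q` of `G`, and `H ≤ N_G(Q)`. But `N_G(Q)` has index
`n_q = p ^ 2`, which cannot divide the index `p` of `H`.
-/

open Subgroup

variable {G : Type*} [Group G] [Finite G] {p q : ℕ} [Fact q.Prime]

theorem Sylow.index_dvd_of_card_eq_mul (P : Sylow q G) (hG : Nat.card G = p * q) :
    P.index ∣ p := by
  obtain ⟨k, hk⟩ := P.dvd_card_of_dvd_card (hG ▸ dvd_mul_left q p)
  have h := P.card_mul_index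
  rw [hk, hG, mul_assoc, mul_comm p q] at h
  exact Dvd.intro_left k (Nat.eq_of_mul_eq_mul_left (Fact.out : q.Prime).pos h)

theorem card_sylow_eq_one_of_card_eq_mul (hp : p.Prime) (hG : Nat.card G = p * q)
    (hdvd : ¬ q ∣ p - 1) : Nat.card (Sylow q G) = 1 := by
  obtain ⟨P⟩ := (inferInstance : Nonempty (Sylow q G))
  have hdvd_p : Nat.card (Sylow q G) ∣ p := P.card_dvd_index.trans (P.index_dvd_of_card_eq_mul hG)
  refine (hp.eq_one_or_self_of_dvd _ hdvd_p).resolve_right fun h_eq => hdvd ?_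
  have hmod : Nat.card (Sylow q G) ≡ 1 [MOD q] := card_sylow_modEq_one q G
  rw [h_eq] at hmod
  exact (Nat.modEq_iff_dvd' hp.one_le).mp hmod.symm

/-- The image in `G` of the normal Sylow `q`-subgroup of `H` is Sylow because `q ∤ [G : H]`. -/
theorem Subgroup.exists_sylow_le_normalizer (H : Subgroup G) (hH : ¬ q ∣ H.index)
    [Subsingleton (Sylow q H)] : ∃ Q : Sylow q G, H ≤ normalizer (Q : Set G) := by
  obtain ⟨P⟩ := (inferInstance : Nonempty (Sylow q H))
  have hP : ¬ q ∣ ((P : Subgroup H).map H.subtype).index := by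
    rw [index_map_subtype, (Fact.out : q.Prime).dvd_mul, not_or]
    exact ⟨P.not_dvd_index, hH⟩
  refine ⟨(P.isPGroup'.map H.subtype).toSylow hP, ?_⟩
  have hP_normal : (((P : Subgroup H).map H.subtype).subgroupOf H).Normal := by
    rw [← comap_subtype, comap_map_eq_self_of_injective H.subtype_injective]
    exact P.normal_of_subsingleton
  exact (normal_subgroupOf_iff_le_normalizer (map_subtype_le _)).mp hP_normal

theorem stmt_13_general (p q : ℕ) (hp : p.Prime) (hq : q.Prime) (hpq : q < p)
    (hdvd : ¬ q ∣ p - 1) (G : Type) [Group G] [Finite G]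
    (hG : Nat.card G = p ^ 2 * q)
    (hnq : Nat.card (Sylow q G) = p ^ 2) :
    ¬ ∃ H : Subgroup G, Nat.card H = p * q := by
  rintro ⟨H, hH⟩
  have : Fact q.Prime := ⟨hq⟩
  have hindex : H.index = p := by
    have h := H.card_mul_index
    rw [hH, hG] at h
    exact Nat.eq_of_mul_eq_mul_left (Nat.mul_pos hp.pos hq.pos) (h.trans (by ring))
  have hq_not_dvd : ¬ q ∣ H.index := by
    rw [hindex, Nat.prime_dvd_prime_iff_eq hq hp]
    exact hpq.ne
  have : Subsingleton (Sylow q H) :=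
    (Nat.card_eq_one_iff_unique.mp (card_sylow_eq_one_of_card_eq_mul hp hH hdvd)).1
  obtain ⟨Q, hHQ⟩ := H.exists_sylow_le_normalizer hq_not_dvd
  have hsq_dvd : p ^ 2 ∣ p := by
    rw [← hnq, Q.card_eq_index_normalizer, ← hindex]
    exact index_dvd_of_le hHQ
  exact absurd (Nat.le_of_dvd hp.pos hsq_dvd) (by nlinarith [hp.two_le])

/-- Let `p > q` be primes with `q` not dividing `p - 1`, and let `G` be a group of order
`p ^ 2 * q` whose Sylow `p`-subgroup is `ℤ_p × ℤ_p` and which has `p ^ 2` Sylow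
`q`-subgroups. Then `G` has no subgroup of order `p * q`. -/
theorem stmt_13 (p q : ℕ) (hp : p.Prime) (hq : q.Prime) (hpq : q < p)
    (hdvd : ¬ q ∣ p - 1) (G : Type) [Group G] [Finite G]
    (hG : Nat.card G = p ^ 2 * q)
    (hSylp : ∀ P : Sylow p G,
      Nonempty ((P : Subgroup G) ≃* Multiplicative (ZMod p × ZMod p)))
    (hnq : Nat.card (Sylow q G) = p ^ 2) :
    ¬ ∃ H : Subgroup G, Nat.card H = p * q :=
  stmt_13_general p q hp hq hpq hdvd G hG hnq
end

section
/- If G and H are finite groups with coprime orders, then d(G × H) = max(d(G), d(H)). -/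
/-!
A generating tuple of length `n ≥ max (d G) (d H)` is obtained by pairing generating tuples of
`G` and `H` of length `n` (padded with `1`). The subgroup it generates maps onto both factors, so
its order is divisible by `|G|` and by `|H|`, hence by `|G| |H|` since these are coprime; so it is
everything. The reverse inequality holds because both factors are quotients of `G × H`.
-/

open Subgroup

namespace Group

lemma rank_le_iff_exists_fin_closure_range_eq_top {G : Type*} [Group G] [FG G] {n : ℕ} :
    rank G ≤ n ↔ ∃ g : Fin n → G, closure (Set.range g) = ⊤ := by
  classical
  constructor
  · intro hn
    obtain ⟨S, hScard, hS⟩ := rank_spec G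
    have hlen : S.toList.length = S.card := S.length_toList
    refine ⟨fun i => S.toList.getD i 1, top_le_iff.mp (hS ▸ closure_mono ?_)⟩
    intro x hx
    obtain ⟨i, hi, rfl⟩ := List.getElem_of_mem (Finset.mem_toList.mpr hx)
    exact ⟨⟨i, by omega⟩, by simp [List.getD, List.getElem?_eq_getElem hi]⟩
  · rintro ⟨g, hg⟩
    calc rank G ≤ (Finset.univ.image g).card := rank_le (by simpa using hg)
      _ ≤ n := Finset.card_image_le.trans_eq (Finset.card_fin n)

end Group

namespace Subgroup

variable {G H : Type*} [Group G] [Group H]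

lemma card_dvd_card_of_map_eq_top (K : Subgroup G) {f : G →* H} (hf : K.map f = ⊤) :
    Nat.card H ∣ Nat.card K := by
  simpa only [hf, card_top] using card_map_dvd K f

lemma eq_top_of_map_fst_eq_top_of_map_snd_eq_top [Finite G] [Finite H]
    (hGH : Nat.Coprime (Nat.card G) (Nat.card H)) {K : Subgroup (G × H)}
    (hfst : K.map (MonoidHom.fst G H) = ⊤) (hsnd : K.map (MonoidHom.snd G H) = ⊤) : K = ⊤ := by
  have hdvd : Nat.card G * Nat.card H ∣ Nat.card K :=
    hGH.mul_dvd_of_dvd_of_dvd (K.card_dvd_card_of_map_eq_top hfst)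
      (K.card_dvd_card_of_map_eq_top hsnd)
  refine K.eq_top_of_le_card ?_
  rw [Nat.card_prod]
  exact Nat.le_of_dvd Nat.card_pos hdvd

end Subgroup

namespace Group

lemma rank_prod_le_max_of_coprime {G H : Type*} [Group G] [Finite G] [Group H] [Finite H]
    (hGH : Nat.Coprime (Nat.card G) (Nat.card H)) :
    rank (G × H) ≤ max (rank G) (rank H) := by
  obtain ⟨g, hg⟩ := rank_le_iff_exists_fin_closure_range_eq_top.mp (le_max_left (rank G) (rank H))
  obtain ⟨f, hf⟩ := rank_le_iff_exists_fin_closure_range_eq_top.mp (le_max_right (rank G) (rank H))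
  refine rank_le_iff_exists_fin_closure_range_eq_top.mpr
    ⟨fun i => (g i, f i), eq_top_of_map_fst_eq_top_of_map_snd_eq_top hGH ?_ ?_⟩
  · rwa [MonoidHom.map_closure, ← Set.range_comp]
  · rwa [MonoidHom.map_closure, ← Set.range_comp]

end Group

/-- If `G` and `H` are finite groups with coprime orders, then
`d(G × H) = max (d G) (d H)`. -/
theorem stmt_15 (G H : Type) [Group G] [Finite G] [Group H] [Finite H]
    (h : Nat.Coprime (Nat.card G) (Nat.card H)) :
    Group.rank (G × H) = max (Group.rank G) (Group.rank H) :=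
  le_antisymm (Group.rank_prod_le_max_of_coprime h)
    (max_le (Group.rank_le_of_surjective (MonoidHom.fst G H) Prod.fst_surjective)
      (Group.rank_le_of_surjective (MonoidHom.snd G H) Prod.snd_surjective))
end

section
/- Every group of order 4p, where p is an odd prime, is 2-generated. -/
/-!
Let `a` have order `p`. If some `b` of order `p` lies outside `⟨a⟩`, then `[⟨a, b⟩ : ⟨a⟩]`
divides `4`, and index `1` or `2` would put `b` in `⟨a⟩` (an index-two subgroup contains every
element of odd order), so `⟨a, b⟩ = G`. Otherwise `⟨a⟩` is normal. An element `b` of order `4`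
then gives `⟨a, b⟩ = G` by Lagrange. If there is none, a subgroup `Q` of order `4` has
exponent `2`; an involution conjugates `a` to `a ^ n` with `n ^ 2 ≡ 1 [ZMOD p]`, i.e. to `a` or
`a⁻¹`, so some `v ≠ 1` in `Q` centralizes `a`. Then `⟨a * v⟩` contains `a` and `v`, and for any
`w ∈ Q \ {1, v}` the subgroup `⟨a * v, w⟩` contains `⟨a⟩` and `Q`.
-/

open Subgroup

lemma Nat.coprime_four_left_of_odd {n : ℕ} (hn : Odd n) : Nat.Coprime 4 n := by
  simpa using (Nat.coprime_two_left.mpr hn).pow_left 2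

section

variable {G : Type*} [Group G]

lemma Subgroup.exists_mem_ne_ne_of_two_lt_card {Q : Subgroup G} (hQ : 2 < Nat.card Q) (x y : G) :
    ∃ w ∈ Q, w ≠ x ∧ w ≠ y := by
  by_contra! h
  have hsub : (Q : Set G) ⊆ {x, y} := fun w hw => by
    by_cases hwx : w = x
    · exact Or.inl hwx
    · exact Or.inr (h w hw hwx)
  have := (Set.ncard_le_ncard hsub (Set.toFinite _)).trans (Set.ncard_insert_le x {y})
  rw [Set.ncard_singleton, ← Nat.card_coe_set_eq] at this
  exact this.not_gt hQ

lemma Subgroup.eq_top_of_coprime_dvd_card [Finite G] {m n : ℕ} (hG : Nat.card G = m * n)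
    (hmn : m.Coprime n) (H : Subgroup G) (hm : m ∣ Nat.card H) (hn : n ∣ Nat.card H) : H = ⊤ :=
  H.eq_top_of_card_eq <|
    Nat.dvd_antisymm (hG ▸ H.card_subgroup_dvd_card) (hG ▸ hmn.mul_dvd_of_dvd_of_dvd hm hn)

lemma Subgroup.card_mul_relIndex {K H : Subgroup G} (h : K ≤ H) :
    Nat.card K * K.relIndex H = Nat.card H := by
  simpa only [relIndex_bot_left] using relIndex_mul_relIndex ⊥ K H bot_le h

lemma Subgroup.mem_of_index_eq_two_of_odd_orderOf {H : Subgroup G} (h : H.index = 2) {g : G}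
    (hg : Odd (orderOf g)) : g ∈ H := by
  obtain ⟨k, hk⟩ := hg
  have hg : g = (g ^ 2) ^ (k + 1) := by
    rw [← pow_mul, show 2 * (k + 1) = orderOf g + 1 by omega, pow_succ, pow_orderOf_eq_one,
      one_mul]
  rw [hg]
  exact pow_mem (sq_mem_of_index_two h g) _

lemma Subgroup.closure_pair_eq_of_card_eq_four {Q : Subgroup G} (hQ : Nat.card Q = 4) {v w : G}
    (hv : v ∈ Q) (hw : w ∈ Q) (hv1 : v ≠ 1) (hw1 : w ≠ 1) (hvw : v ≠ w) :
    closure {v, w} = Q := by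
  have : Finite Q := Nat.finite_of_card_ne_zero (by omega)
  have hle : closure {v, w} ≤ Q :=
    (closure_le Q).mpr (Set.insert_subset hv (Set.singleton_subset_iff.mpr hw))
  have hdvd : Nat.card (closure {v, w}) ∣ 4 := hQ ▸ card_dvd_of_le hle
  have hthree : 3 ≤ Nat.card (closure {v, w}) := by
    have hsub : ({1, v, w} : Set G) ⊆ closure {v, w} :=
      Set.insert_subset (one_mem _) subset_closure
    calc 3 = ({1, v, w} : Set G).ncard := by
          rw [Set.ncard_insert_of_notMem (by simp [hv1.symm, hw1.symm]), Set.ncard_pair hvw]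
      _ ≤ (closure {v, w} : Set G).ncard :=
          Set.ncard_le_ncard hsub ((Set.toFinite (Q : Set G)).subset hle)
      _ = _ := Nat.card_coe_set_eq _ |>.symm
  refine eq_of_le_of_card_ge hle ?_
  have := Nat.le_of_dvd (by norm_num) hdvd
  interval_cases h : Nat.card (closure {v, w}) <;> omega

lemma conj_eq_self_or_inv_of_sq_eq_one {a v : G} (ha : (orderOf a).Prime) (hv : v ^ 2 = 1)
    (hconj : v * a * v⁻¹ ∈ zpowers a) : v * a * v⁻¹ = a ∨ v * a * v⁻¹ = a⁻¹ := by
  have := Fact.mk ha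
  obtain ⟨n, hn⟩ := hconj
  have hn : a ^ n = v * a * v⁻¹ := hn
  have hnn : a ^ (n * n) = a ^ (1 : ℤ) :=
    calc a ^ (n * n) = v * (v * a * v⁻¹) * v⁻¹ := by rw [zpow_mul, hn, conj_zpow, hn]
      _ = (v * v) * a * (v * v)⁻¹ := by group
      _ = a ^ (1 : ℤ) := by rw [← sq, hv]; group
  have hpow (m : ℤ) (h : (n : ZMod (orderOf a)) = m) : a ^ n = a ^ m :=
    zpow_eq_zpow_iff_modEq.mpr ((ZMod.intCast_eq_intCast_iff _ _ _).mp h)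
  rw [zpow_eq_zpow_iff_modEq, ← ZMod.intCast_eq_intCast_iff, Int.cast_mul, Int.cast_one,
    mul_self_eq_one_iff] at hnn
  rw [← hn]
  rcases hnn with h | h
  · exact Or.inl (by simpa using hpow 1 (by simpa using h))
  · exact Or.inr (by simpa using hpow (-1) (by simpa using h))

lemma commute_of_conj_eq_self {a v : G} (h : v * a * v⁻¹ = a) : Commute a v :=
  (mul_inv_eq_iff_eq_mul.mp h).symm

lemma exists_ne_one_commute_of_sq_eq_one {a : G} (ha : (orderOf a).Prime) {Q : Subgroup G}
    (hQ : 2 < Nat.card Q) (hsq : ∀ x ∈ Q, x ^ 2 = 1)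
    (hconj : ∀ x ∈ Q, x * a * x⁻¹ ∈ zpowers a) : ∃ v ∈ Q, v ≠ 1 ∧ Commute a v := by
  obtain ⟨s, hs, hs1, -⟩ := exists_mem_ne_ne_of_two_lt_card hQ 1 1
  obtain ⟨t, ht, ht1, hts⟩ := exists_mem_ne_ne_of_two_lt_card hQ 1 s
  have dichotomy := fun x (hx : x ∈ Q) =>
    conj_eq_self_or_inv_of_sq_eq_one ha (hsq x hx) (hconj x hx)
  rcases dichotomy s hs with hs' | hs'
  · exact ⟨s, hs, hs1, commute_of_conj_eq_self hs'⟩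
  rcases dichotomy t ht with ht' | ht'
  · exact ⟨t, ht, ht1, commute_of_conj_eq_self ht'⟩
  -- two inverting involutions compose to a centralizing one
  refine ⟨t * s, mul_mem ht hs, ?_, commute_of_conj_eq_self ?_⟩
  · intro h
    exact hts ((eq_inv_of_mul_eq_one_left h).trans
      (inv_eq_of_mul_eq_one_right (by rw [← sq]; exact hsq s hs)))
  · calc t * s * a * (t * s)⁻¹ = (t * (s * a * s⁻¹) * t⁻¹) := by group
      _ = (t * a * t⁻¹)⁻¹ := by rw [hs']; group
      _ = a := by rw [ht', inv_inv]

lemma Commute.mul_pow_orderOf_eq_of_sq_eq_one {a v : G} (h : Commute a v)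
    (ha : Odd (orderOf a)) (hv : v ^ 2 = 1) : (a * v) ^ orderOf a = v := by
  rw [h.mul_pow, pow_orderOf_eq_one, one_mul]
  obtain ⟨k, hk⟩ := ha
  rw [hk, pow_succ, pow_mul, hv, one_pow, one_mul]

lemma closure_pair_eq_top_of_notMem_zpowers [Finite G] {p : ℕ} (hodd : Odd p)
    (hG : Nat.card G = 4 * p) {a b : G} (ha : orderOf a = p) (hb : orderOf b = p)
    (hba : b ∉ zpowers a) : closure {a, b} = ⊤ := by
  set H := closure {a, b}
  have hbH : b ∈ H := subset_closure (by simp)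
  have hle : zpowers a ≤ H := zpowers_le.mpr (subset_closure (by simp))
  have hcard : p * (zpowers a).relIndex H = Nat.card H := by
    rw [← card_mul_relIndex hle, Nat.card_zpowers, ha]
  have hr : (zpowers a).relIndex H ∣ 4 := by
    have := hG ▸ H.card_subgroup_dvd_card
    rw [← hcard, mul_comm 4] at this
    exact Nat.dvd_of_mul_dvd_mul_left hodd.pos this
  have hr0 : 0 < (zpowers a).relIndex H := by
    refine Nat.pos_of_ne_zero fun h => ?_
    rw [h, mul_zero] at hcard
    exact Nat.card_pos.ne hcard
  have hr4 := Nat.le_of_dvd (by norm_num) hr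
  interval_cases hrH : (zpowers a).relIndex H
  · exact absurd (relIndex_eq_one.mp hrH hbH) hba
  · have := mem_of_index_eq_two_of_odd_orderOf (H := (zpowers a).subgroupOf H) hrH
      (g := ⟨b, hbH⟩) (by rwa [orderOf_mk, hb])
    exact absurd (mem_subgroupOf.mp this) hba
  · norm_num at hr
  · exact H.eq_top_of_card_eq (by rw [← hcard, hG, mul_comm])

lemma sq_eq_one_of_mem_of_card_eq_four {Q : Subgroup G} (hQ : Nat.card Q = 4)
    (h4 : ∀ x : G, orderOf x ≠ 4) {x : G} (hx : x ∈ Q) : x ^ 2 = 1 := by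
  obtain ⟨i, hi, hxi⟩ :=
    (Nat.dvd_prime_pow Nat.prime_two (m := 2)).mp (hQ ▸ Q.orderOf_dvd_natCard hx)
  have hi2 : i ≠ 2 := fun h => h4 x (by rw [hxi, h]; norm_num)
  rw [← orderOf_dvd_iff_pow_eq_one, hxi]
  exact (pow_dvd_pow 2 (by omega : i ≤ 1)).trans (pow_one 2).dvd

lemma exists_closure_pair_eq_top_of_forall_orderOf_ne_four [Finite G] {p : ℕ} (hp : p.Prime)
    (hodd : Odd p) (hG : Nat.card G = 4 * p) {a : G} (ha : orderOf a = p)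
    (hnormal : ∀ x : G, orderOf x = p → x ∈ zpowers a) (h4 : ∀ x : G, orderOf x ≠ 4) :
    ∃ x y : G, closure {x, y} = ⊤ := by
  have := Fact.mk Nat.prime_two
  obtain ⟨Q, hQ⟩ : ∃ Q : Subgroup G, Nat.card Q = 4 :=
    Sylow.exists_subgroup_card_pow_prime 2 (n := 2) (by rw [hG]; exact dvd_mul_right 4 p)
  have hconj (x : G) (_ : x ∈ Q) : x * a * x⁻¹ ∈ zpowers a :=
    hnormal _ (ha ▸ (SemiconjBy.orderOf_eq x (by simp [SemiconjBy])).symm)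
  have hsq (x : G) (hx : x ∈ Q) : x ^ 2 = 1 := sq_eq_one_of_mem_of_card_eq_four hQ h4 hx
  obtain ⟨v, hvQ, hv1, hav⟩ := exists_ne_one_commute_of_sq_eq_one (ha ▸ hp) (by rw [hQ]; norm_num)
    hsq hconj
  obtain ⟨w, hwQ, hw1, hwv⟩ := exists_mem_ne_ne_of_two_lt_card (by rw [hQ]; norm_num) 1 v
  have havH : a * v ∈ closure {a * v, w} := subset_closure (by simp)
  have hvH : v ∈ closure {a * v, w} := by
    simpa only [hav.mul_pow_orderOf_eq_of_sq_eq_one (ha ▸ hodd) (hsq v hvQ)]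
      using pow_mem havH (orderOf a)
  refine ⟨a * v, w, eq_top_of_coprime_dvd_card hG (Nat.coprime_four_left_of_odd hodd) _ ?_ ?_⟩
  · have hQle : Q ≤ closure {a * v, w} := by
      rw [← closure_pair_eq_of_card_eq_four hQ hvQ hwQ hv1 hw1 hwv.symm, closure_le]
      exact Set.insert_subset hvH (Set.singleton_subset_iff.mpr (subset_closure (by simp)))
    exact hQ ▸ card_dvd_of_le hQle
  · have haH : a ∈ closure {a * v, w} := by
      simpa using mul_mem havH (inv_mem hvH)
    exact ha ▸ orderOf_dvd_natCard _ haH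

end

/-- Every group of order `4 * p`, where `p` is an odd prime, is 2-generated. -/
theorem stmt_18 (p : ℕ) (hp : p.Prime) (hodd : Odd p)
    (G : Type) [Group G] [Finite G] (hG : Nat.card G = 4 * p) :
    ∃ a b : G, Subgroup.closure {a, b} = ⊤ := by
  have := Fact.mk hp
  obtain ⟨a, ha⟩ := exists_prime_orderOf_dvd_card' p (hG ▸ dvd_mul_left p 4)
  by_cases hnormal : ∀ x : G, orderOf x = p → x ∈ zpowers a
  · by_cases h4 : ∃ b : G, orderOf b = 4
    · obtain ⟨b, hb⟩ := h4
      refine ⟨a, b, eq_top_of_coprime_dvd_card hG (Nat.coprime_four_left_of_odd hodd) _ ?_ ?_⟩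
      · exact hb ▸ orderOf_dvd_natCard _ (subset_closure (by simp))
      · exact ha ▸ orderOf_dvd_natCard _ (subset_closure (by simp))
    · push Not at h4
      exact exists_closure_pair_eq_top_of_forall_orderOf_ne_four hp hodd hG ha hnormal h4
  · push Not at hnormal
    obtain ⟨b, hb, hba⟩ := hnormal
    exact ⟨a, b, closure_pair_eq_top_of_notMem_zpowers hodd hG ha hb hba⟩
end

section
/- For every odd prime p with p ≡ 1 (mod 2) and 2 dividing p − 1 (which always holds), there exists a group of order 2·p^2 that is not 2-generated; hence n = 2·p^2 is never a 2-generated number for odd primes p. -/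
/-!
Witness: the generalized dihedral group `(ℤ/p × ℤ/p) ⋊ ℤˣ`, with `-1` acting by inversion.
Given a reflection `r`, any second element `b` is a rotation `c` or `c * r`, and the subgroup
`⟨c⟩ ∪ ⟨c⟩ r` is closed, since `r` inverts every rotation. So two generators, at least one of
them a reflection, force the rotation group `ℤ/p × ℤ/p` to be cyclic, which it is not.
-/

open SemidirectProduct Subgroup

section GeneralizedDihedral

variable (A : Type*) [CommGroup A]

def zpowUnitsAut : ℤˣ →* MulAut A where
  toFun ε :=
    { toFun := fun a => a ^ (ε : ℤ)
      invFun := fun a => a ^ (ε : ℤ)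
      left_inv := fun a => by simp [← zpow_mul, ← Units.val_mul]
      right_inv := fun a => by simp [← zpow_mul, ← Units.val_mul]
      map_mul' := fun a b => mul_zpow a b ε }
  map_one' := by ext; simp
  map_mul' ε δ := by ext a; simp [← zpow_mul, mul_comm]

abbrev GeneralizedDihedralGroup := A ⋊[zpowUnitsAut A] ℤˣ

variable {A}

@[simp]
lemma zpowUnitsAut_apply (ε : ℤˣ) (a : A) : zpowUnitsAut A ε a = a ^ (ε : ℤ) := rfl

namespace GeneralizedDihedralGroup

lemma mul_self_eq_one {r : GeneralizedDihedralGroup A} (hr : r.right = -1) : r * r = 1 := by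
  ext <;> simp [hr]

lemma conj_inl {r : GeneralizedDihedralGroup A} (hr : r.right = -1) (a : A) :
    r * inl a * r⁻¹ = inl a⁻¹ := by
  ext <;> simp [hr]

lemma exists_eq_inl_or_eq_inl_mul {r : GeneralizedDihedralGroup A} (hr : r.right = -1)
    (b : GeneralizedDihedralGroup A) :
    ∃ c : A, b = inl c ∨ b = inl c * r := by
  rcases Int.units_eq_one_or b.right with hb | hb
  · exact ⟨b.left, .inl (by ext <;> simp [hb])⟩
  · exact ⟨b.left * r.left⁻¹, .inr (by ext <;> simp [hb, hr])⟩

variable (H : Subgroup A) {r : GeneralizedDihedralGroup A} (hr : r.right = -1)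

def reflectionHom : ℤˣ →* GeneralizedDihedralGroup A where
  toFun ε := if ε = 1 then 1 else r
  map_one' := if_pos rfl
  map_mul' ε δ := by
    rcases Int.units_eq_one_or ε with rfl | rfl <;> rcases Int.units_eq_one_or δ with rfl | rfl <;>
      simp [mul_self_eq_one hr]

lemma reflectionHom_right (ε : ℤˣ) : (reflectionHom hr ε).right = ε := by
  rcases Int.units_eq_one_or ε with rfl | rfl <;> simp [reflectionHom, hr]

/-- Its image is `H ∪ H r`. -/
def extendReflection : GeneralizedDihedralGroup H →* GeneralizedDihedralGroup A :=
  lift (inl.comp H.subtype) (reflectionHom hr) fun ε => by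
    refine MonoidHom.ext fun a => ?_
    rcases Int.units_eq_one_or ε with rfl | rfl
    · simp [reflectionHom]
    · simp [reflectionHom, conj_inl hr]

lemma mem_range_extendReflection : r ∈ (extendReflection H hr).range :=
  ⟨inr (-1), by simp [extendReflection, reflectionHom]⟩

lemma inl_mem_range_extendReflection_iff {a : A} :
    inl a ∈ (extendReflection H hr).range ↔ a ∈ H := by
  refine ⟨fun ⟨g, hg⟩ => ?_, fun ha => ⟨inl ⟨a, ha⟩, by simp [extendReflection]⟩⟩
  have hright : g.right = 1 := by
    simpa [extendReflection, lift, reflectionHom_right] using congrArg rightHom hg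
  obtain ⟨⟨b, hb⟩, ε⟩ := g
  obtain rfl : ε = 1 := hright
  have hba : b = a := by simpa [extendReflection] using hg
  exact hba ▸ hb

lemma exists_closure_pair_le_range_extendReflection (b : GeneralizedDihedralGroup A) :
    ∃ c : A, closure {r, b} ≤ (extendReflection (zpowers c) hr).range := by
  have hinl (c : A) := (inl_mem_range_extendReflection_iff (zpowers c) hr).2 (mem_zpowers c)
  obtain ⟨c, rfl | rfl⟩ := exists_eq_inl_or_eq_inl_mul hr b <;>
    refine ⟨c, (closure_le _).2 (Set.pair_subset (mem_range_extendReflection _ hr) ?_)⟩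
  · exact hinl c
  · exact mul_mem (hinl c) (mem_range_extendReflection _ hr)

lemma right_eq_neg_one_or_of_closure_pair_eq_top {a b : GeneralizedDihedralGroup A}
    (h : closure {a, b} = ⊤) : a.right = -1 ∨ b.right = -1 := by
  by_contra! hab
  have hle : closure {a, b} ≤ rightHom.ker := (closure_le _).2 <| Set.pair_subset
    (by simpa [Int.units_ne_iff_eq_neg] using hab.1) (by simpa [Int.units_ne_iff_eq_neg] using hab.2)
  have : (inr (-1) : GeneralizedDihedralGroup A) ∈ rightHom.ker := hle (h ▸ mem_top _)
  simp at this

theorem isCyclic_of_closure_pair_eq_top {a b : GeneralizedDihedralGroup A}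
    (h : closure {a, b} = ⊤) : IsCyclic A := by
  wlog ha : a.right = -1 generalizing a b
  · exact this (Set.pair_comm a b ▸ h)
      ((right_eq_neg_one_or_of_closure_pair_eq_top h).resolve_left ha)
  obtain ⟨c, hc⟩ := exists_closure_pair_le_range_extendReflection ha b
  refine isCyclic_iff_exists_zpowers_eq_top.2 ⟨c, eq_top_iff.2 fun x _ => ?_⟩
  exact (inl_mem_range_extendReflection_iff _ ha).1 (hc (h ▸ mem_top (inl x)))

end GeneralizedDihedralGroup

end GeneralizedDihedral

lemma not_isAddCyclic_zmod_prod_self {n : ℕ} (hn : n ≠ 1) : ¬IsAddCyclic (ZMod n × ZMod n) := by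
  simp [AddGroup.isAddCyclic_prod_iff, hn]

theorem stmt_19_general (p : ℕ) (hp : p.Prime) :
    ¬ ∀ (G : Type) [Group G] [Finite G], Nat.card G = 2 * p ^ 2 →
      ∃ a b : G, Subgroup.closure {a, b} = ⊤ := by
  intro h
  let D := GeneralizedDihedralGroup (Multiplicative (ZMod p × ZMod p))
  have hcard : Nat.card D = 2 * p ^ 2 := by
    rw [SemidirectProduct.card, Nat.card_congr Multiplicative.toAdd, Nat.card_prod, Nat.card_zmod,
      Nat.card_eq_fintype_card (α := ℤˣ), Fintype.card_units_int]
    ring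
  have : Finite D := Nat.finite_of_card_ne_zero (by simp [hcard, hp.ne_zero])
  obtain ⟨a, b, hab⟩ := h D hcard
  exact not_isAddCyclic_zmod_prod_self hp.one_lt.ne'
    (isCyclic_multiplicative_iff.1 (GeneralizedDihedralGroup.isCyclic_of_closure_pair_eq_top hab))

/-- For every odd prime `p`, there exists a group of order `2 * p ^ 2` that is not 2-generated;
hence `n = 2 * p ^ 2` is never a 2-generated number for odd primes `p`. -/
theorem stmt_19 (p : ℕ) (hp : p.Prime) (hodd : Odd p) :
    ¬ ∀ (G : Type) [Group G] [Finite G], Nat.card G = 2 * p ^ 2 →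
      ∃ a b : G, Subgroup.closure {a, b} = ⊤ :=
  stmt_19_general p hp
end
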